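/- arXiv:2210.15367 — 4 statements merged into one kernel-verified Lean document; each statement's English description precedes it below -/
import Mathlib

section
/- Let θ = Σ_a θ^a ⊗ T_a where {θ^a} is a basis of V* dual-orthonormal (g(θ^a,θ^b) = η^{ab}) and {T_a} the η-orthonormal basis of ℝ^m. Then the squared norm of the k-th Kulkarni–Nomizu power θ^k = θ ⩕ ⋯ ⩕ θ (k times) equals m!·k!/(m−k)!. -/
/-!
Expanding the `k`-th power of `θ = Σ_a θ^a ⊗ T_a` gives
`θ^k = Σ_f θ_f` with `θ_f = θ^{f 1} ∧ ⋯ ∧ θ^{f k} ⊗ T_{f 1} ∧ ⋯ ∧ T_{f k}`, summed over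
all maps `f : {1,…,k} → {1,…,m}`. Both Gram determinants in `⟨θ_f, θ_{f'}⟩` equal
`(∏ ε_{f i}) · det [f i = f' j]` with signs `ε = ±1`, so each pair contributes
`det [f i = f' j]²`. This vanishes unless `f` is injective and `f' = f ∘ σ` for a permutation
`σ`, in which case it is `sign σ ² = 1`; hence the sum is `k!` times the number `m!/(m-k)!`
of injective `f`.
-/

open TensorProduct ExteriorAlgebra

noncomputable section

/-- Wedge product of a finite family of vectors, as an element of the exterior algebra. -/
def wedgeL {M : Type} [AddCommGroup M] [Module ℝ M] {n : ℕ} (v : Fin n → M) :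
    ExteriorAlgebra ℝ M :=
  (List.ofFn fun i => ι ℝ (v i)).prod

/-- The bigraded algebra `Λ V* ⊗ Λ ℝ^m` of vector-valued forms, with `U` playing the
role of `V*` and `Fin m → ℝ` the role of `W = ℝ^m`. -/
abbrev Omega (U : Type) [AddCommGroup U] [Module ℝ U] (m : ℕ) : Type :=
  ExteriorAlgebra ℝ U ⊗[ℝ] ExteriorAlgebra ℝ (Fin m → ℝ)

/-- The subspace of bidegree `(k, h)` elements: `Λ^k U ⊗ Λ^h ℝ^m`. -/
def bideg (U : Type) [AddCommGroup U] [Module ℝ U] (m k h : ℕ) :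
    Submodule ℝ (Omega U m) :=
  Submodule.map₂ (TensorProduct.mk ℝ _ _) (⋀[ℝ]^k U) (⋀[ℝ]^h (Fin m → ℝ))

/-- The solder element `θ = Σ_a θ^a ⊗ T_a`, where `T_a` is the standard basis of `ℝ^m`. -/
def solder {U : Type} [AddCommGroup U] [Module ℝ U] {m : ℕ} (u : Fin m → U) : Omega U m :=
  ∑ a, ι ℝ (u a) ⊗ₜ[ℝ] ι ℝ (Pi.single a 1)

/-- The composite volume element `ν = ν_g ⊗ n_h` (wedge of the dual orthonormal basis
tensor the wedge of the standard basis). -/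
def vol {U : Type} [AddCommGroup U] [Module ℝ U] {m : ℕ} (u : Fin m → U) : Omega U m :=
  wedgeL u ⊗ₜ[ℝ] wedgeL (fun a : Fin m => Pi.single a (1 : ℝ))

lemma sum_pow_eq_sum_prod_ofFn {A ι : Type*} [Semiring A] [Fintype ι] (x : ι → A) (k : ℕ) :
    (∑ a, x a) ^ k = ∑ f : Fin k → ι, (List.ofFn fun i => x (f i)).prod := by
  induction k with
  | zero => simp
  | succ k ih =>
    rw [pow_succ', ih, Finset.sum_mul_sum, ← Fintype.sum_prod_type',
      ← (Fin.consEquiv fun _ => ι).sum_comp]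
    refine Fintype.sum_congr _ _ fun ⟨a, f⟩ => ?_
    simp [List.ofFn_succ, Fin.consEquiv]

lemma list_prod_ofFn_tmul {R A B : Type*} [CommSemiring R] [Semiring A] [Algebra R A]
    [Semiring B] [Algebra R B] {n : ℕ} (a : Fin n → A) (b : Fin n → B) :
    (List.ofFn fun i => a i ⊗ₜ[R] b i).prod =
      (List.ofFn a).prod ⊗ₜ[R] (List.ofFn b).prod := by
  simp only [List.ofFn_eq_map]
  exact List.prod_hom₂ _ _ (fun _ _ _ _ => (Algebra.TensorProduct.tmul_mul_tmul _ _ _ _).symm)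
    Algebra.TensorProduct.one_def.symm _ _

lemma solder_pow {U : Type} [AddCommGroup U] [Module ℝ U] {m : ℕ} (u : Fin m → U) (k : ℕ) :
    solder u ^ k = ∑ f : Fin k → Fin m,
      wedgeL (fun i => u (f i)) ⊗ₜ[ℝ] wedgeL (fun i => Pi.single (f i) (1 : ℝ)) := by
  simp only [solder, sum_pow_eq_sum_prod_ofFn, list_prod_ofFn_tmul, wedgeL]

lemma Matrix.exists_perm_forall_ne_zero_of_det_ne_zero {R n : Type*} [CommRing R] [Fintype n]
    [DecidableEq n] {M : Matrix n n R} (h : M.det ≠ 0) :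
    ∃ σ : Equiv.Perm n, ∀ i, M (σ i) i ≠ 0 := by
  rw [Matrix.det_apply] at h
  obtain ⟨σ, -, hσ⟩ := Finset.exists_ne_zero_of_sum_ne_zero h
  exact ⟨σ, fun i hi =>
    hσ (smul_eq_zero_of_right _ (Finset.prod_eq_zero (Finset.mem_univ i) hi))⟩

section CoincidenceMatrix

open Matrix Equiv

variable {R α : Type*} [CommRing R] [DecidableEq α] {k : ℕ}

def coincidenceMatrix (f g : Fin k → α) : Matrix (Fin k) (Fin k) R :=
  of fun i j => if f i = g j then 1 else 0

lemma det_coincidenceMatrix_eq_zero_of_not_injective {f : Fin k → α}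
    (hf : ¬ Function.Injective f) (g : Fin k → α) :
    (coincidenceMatrix f g : Matrix _ _ R).det = 0 := by
  obtain ⟨i₁, i₂, he, hne⟩ := Function.not_injective_iff.mp hf
  exact det_zero_of_row_eq hne (funext fun j => by simp [coincidenceMatrix, he])

lemma exists_perm_eq_comp_of_det_coincidenceMatrix_ne_zero {f g : Fin k → α}
    (h : (coincidenceMatrix f g : Matrix _ _ R).det ≠ 0) :
    ∃ σ : Perm (Fin k), g = f ∘ σ := by
  obtain ⟨σ, hσ⟩ := exists_perm_forall_ne_zero_of_det_ne_zero h
  refine ⟨σ, funext fun i => ?_⟩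
  by_contra hne
  exact hσ i (if_neg fun h => hne h.symm)

lemma det_coincidenceMatrix_comp_perm {f : Fin k → α} (hf : Function.Injective f)
    (σ : Perm (Fin k)) : (coincidenceMatrix f (f ∘ σ) : Matrix _ _ R).det = Perm.sign σ := by
  have : (coincidenceMatrix f (f ∘ σ) : Matrix _ _ R) = (1 : Matrix _ _ R).submatrix id σ := by
    ext i j
    simp [coincidenceMatrix, one_apply, hf.eq_iff]
  rw [this, det_permute', det_one, mul_one]

lemma sum_sq_det_coincidenceMatrix_of_injective [Fintype α] {f : Fin k → α}
    (hf : Function.Injective f) :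
    ∑ g : Fin k → α, (coincidenceMatrix f g : Matrix _ _ R).det ^ 2 = k.factorial := by
  -- only the reorderings `g = f ∘ σ` contribute, each with `(sign σ) ^ 2 = 1`
  rw [← Fintype.sum_of_injective (fun σ : Perm (Fin k) => f ∘ σ)
    (fun σ τ h => Perm.ext fun i => hf (congrFun h i)) (fun _ => (1 : R))]
  · simp [Fintype.card_perm]
  · intro g hg
    have hdet : (coincidenceMatrix f g : Matrix _ _ R).det = 0 := by
      by_contra hne
      obtain ⟨σ, rfl⟩ := exists_perm_eq_comp_of_det_coincidenceMatrix_ne_zero hne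
      exact hg ⟨σ, rfl⟩
    rw [hdet, zero_pow two_ne_zero]
  · intro σ
    rw [det_coincidenceMatrix_comp_perm hf, ← Int.cast_pow, ← Units.val_pow_eq_pow_val,
      Int.units_sq, Units.val_one, Int.cast_one]

lemma sum_sum_sq_det_coincidenceMatrix [Fintype α] :
    ∑ f : Fin k → α, ∑ g : Fin k → α, (coincidenceMatrix f g : Matrix _ _ R).det ^ 2 =
      (Fintype.card α).descFactorial k * k.factorial := by
  classical
  calc ∑ f : Fin k → α, ∑ g : Fin k → α, (coincidenceMatrix f g : Matrix _ _ R).det ^ 2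
      = ∑ f : Fin k → α, if Function.Injective f then (k.factorial : R) else 0 := by
        refine Fintype.sum_congr _ _ fun f => ?_
        split_ifs with hf
        · exact sum_sq_det_coincidenceMatrix_of_injective hf
        · simp [det_coincidenceMatrix_eq_zero_of_not_injective hf]
    _ = (Fintype.card α).descFactorial k * k.factorial := by
        rw [← Finset.sum_filter, Finset.sum_const, nsmul_eq_mul,
          ← Fintype.card_subtype, Fintype.card_congr (Equiv.subtypeInjectiveEquivEmbedding _ _),
          Fintype.card_embedding_eq, Fintype.card_fin]

lemma sq_det_signedCoincidence {ε : α → R} (hε : ∀ a, ε a ^ 2 = 1) (f g : Fin k → α) :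
    (of fun i j => if f i = g j then ε (f i) else 0 : Matrix (Fin k) (Fin k) R).det ^ 2 =
      (coincidenceMatrix f g : Matrix _ _ R).det ^ 2 := by
  have : (of fun i j => if f i = g j then ε (f i) else 0 : Matrix (Fin k) (Fin k) R) =
      diagonal (ε ∘ f) * coincidenceMatrix f g := by
    ext i j
    simp [coincidenceMatrix, diagonal_mul]
  rw [this, det_mul, det_diagonal, mul_pow, ← Finset.prod_pow]
  simp [hε]

end CoincidenceMatrix

theorem stmt_5_general (m s k : ℕ) (hk : k ≤ m)
    (U : Type) [AddCommGroup U] [Module ℝ U]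
    (η : (Fin m → ℝ) →ₗ[ℝ] (Fin m → ℝ) →ₗ[ℝ] ℝ)
    (hη : ∀ v w, η v w = ∑ a : Fin _, (if (a : ℕ) < s then (-1 : ℝ) else 1) * v a * w a)
    (g : U →ₗ[ℝ] U →ₗ[ℝ] ℝ) (u : Module.Basis (Fin m) ℝ U)
    (hg : ∀ a b, g (u a) (u b) = if a = b then (if (a : ℕ) < s then (-1 : ℝ) else 1) else 0)
    (P : Omega U m →ₗ[ℝ] Omega U m →ₗ[ℝ] ℝ)
    (hP : ∀ (k h : ℕ) (φ ψ : Fin k → U) (v w : Fin h → (Fin m → ℝ)),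
      P (wedgeL φ ⊗ₜ[ℝ] wedgeL v) (wedgeL ψ ⊗ₜ[ℝ] wedgeL w) =
        Matrix.det (Matrix.of fun i j => g (φ i) (ψ j)) *
        Matrix.det (Matrix.of fun i j => η (v i) (w j)))
    :
    P ((solder (fun a => u a)) ^ k) ((solder (fun a => u a)) ^ k) =
      ((Nat.factorial m : ℝ) * (Nat.factorial k : ℝ)) / (Nat.factorial (m - k) : ℝ) := by
  set ε : Fin m → ℝ := fun a => if (a : ℕ) < s then -1 else 1
  have hε : ∀ a, ε a ^ 2 = 1 := fun a => by dsimp only [ε]; split_ifs <;> norm_num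
  have hg_basis : ∀ a b, g (u a) (u b) = if a = b then ε a else 0 := hg
  have hη_single :
      ∀ a b : Fin m, η (Pi.single a 1) (Pi.single b 1) = if a = b then ε a else 0 := by
    intro a b
    by_cases h : a = b
    · simp [hη, h, ε, Pi.single_apply]
    · simp [hη, Pi.single_apply, h, Ne.symm h]
  have hterm : ∀ f f' : Fin k → Fin m,
      P (wedgeL (fun i => u (f i)) ⊗ₜ[ℝ] wedgeL (fun i => Pi.single (f i) (1 : ℝ)))
        (wedgeL (fun i => u (f' i)) ⊗ₜ[ℝ] wedgeL (fun i => Pi.single (f' i) (1 : ℝ))) =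
      (coincidenceMatrix f f' : Matrix _ _ ℝ).det ^ 2 := by
    intro f f'
    simp only [hP, hg_basis, hη_single, ← sq]
    exact sq_det_signedCoincidence hε f f'
  simp only [solder_pow, map_sum, LinearMap.sum_apply, hterm]
  rw [Finset.sum_comm, sum_sum_sq_det_coincidenceMatrix, Fintype.card_fin,
    eq_div_iff (Nat.cast_ne_zero.mpr (Nat.factorial_ne_zero _)),
    ← Nat.factorial_mul_descFactorial hk]
  push_cast
  ring

/-- Squared norm of the `k`-th Kulkarni–Nomizu power of the solder form:
`⟨θ^k, θ^k⟩ = m!·k!/(m−k)!`. -/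
theorem stmt_5 (m r s k : ℕ) (hm : r + s = m) (hk : k ≤ m)
    (U : Type) [AddCommGroup U] [Module ℝ U]
    (η : (Fin m → ℝ) →ₗ[ℝ] (Fin m → ℝ) →ₗ[ℝ] ℝ)
    (hη : ∀ v w, η v w = ∑ a : Fin _, (if (a : ℕ) < s then (-1 : ℝ) else 1) * v a * w a)
    (g : U →ₗ[ℝ] U →ₗ[ℝ] ℝ) (u : Module.Basis (Fin m) ℝ U)
    (hg : ∀ a b, g (u a) (u b) = if a = b then (if (a : ℕ) < s then (-1 : ℝ) else 1) else 0)
    (P : Omega U m →ₗ[ℝ] Omega U m →ₗ[ℝ] ℝ)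
    (hP : ∀ (k h : ℕ) (φ ψ : Fin k → U) (v w : Fin h → (Fin m → ℝ)),
      P (wedgeL φ ⊗ₜ[ℝ] wedgeL v) (wedgeL ψ ⊗ₜ[ℝ] wedgeL w) =
        Matrix.det (Matrix.of fun i j => g (φ i) (ψ j)) *
        Matrix.det (Matrix.of fun i j => η (v i) (w j)))
    :
    P ((solder (fun a => u a)) ^ k) ((solder (fun a => u a)) ^ k) =
      ((Nat.factorial m : ℝ) * (Nat.factorial k : ℝ)) / (Nat.factorial (m - k) : ℝ) :=
  stmt_5_general m s k hk U η hη g u hg P hP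
end
end

section
/- The composite Hodge dual of the k-th power of the solder form is ⋆̄(θ^k) = (k!/(m−k)!) θ^{m−k}. -/
/-!
Expanding `θ^p` over all tuples `f : Fin p → Fin m` gives `Σ_f θ^f ⊗ T_f`; non-injective tuples
contribute nothing, and reordering a tuple changes both factors by the same sign, so
`θ^p = p! Σ_{|I| = p} θ^I ⊗ T_I`. On these monomials the metric pairing is diagonal with entries
`(±1)²`, whence `⟨θ^I ⊗ T_J, θ^k⟩ = k! δ_IJ`; and `θ^I ⊗ T_J ∧ θ^{m-k} = (m-k)! δ_IJ ν`, because
only complementary index sets multiply to a nonzero top form. So `⋆̄θ^k - (k!/(m-k)!) θ^{m-k}`,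
of bidegree `(m-k, m-k)`, wedges to zero against every monomial of bidegree `(k, k)`, and the
wedge pairing between complementary bidegrees is nondegenerate.
-/

open TensorProduct ExteriorAlgebra

noncomputable section

open Set.powersetCard in
theorem sum_eq_factorial_smul_sum_powersetCard {I N : Type*} [Fintype I] [LinearOrder I]
    [AddCommMonoid N] {p : ℕ} (F : (Fin p → I) → N)
    (hF : ∀ f, ¬ Function.Injective f → F f = 0)
    (hF_perm : ∀ f (π : Equiv.Perm (Fin p)), F (f ∘ π) = F f) :
    ∑ f, F f = p.factorial • ∑ s : Set.powersetCard I p, F (ofFinEmbEquiv.symm s) := by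
  classical
  have hsum : ∀ s : Set.powersetCard I p, ∑ π : Equiv.Perm (Fin p),
      F (ofFinEmbEquiv.symm s ∘ π) = p.factorial • F (ofFinEmbEquiv.symm s) := fun s => by
    simp [hF_perm, Fintype.card_perm]
  simp_rw [Finset.smul_sum, ← hsum, ← Finset.sum_product']
  symm
  refine Finset.sum_of_injOn (fun x => ofFinEmbEquiv.symm x.1 ∘ x.2) ?_ (by simp) ?_ (by simp)
  · rintro ⟨s, π⟩ - ⟨t, ρ⟩ - h
    have hst : s = t := by
      have := congrArg Set.range h
      simp only [Set.range_comp, Equiv.range_eq_univ, Set.image_univ] at this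
      refine Subtype.ext (Finset.ext fun a => ?_)
      have ha := mem_range_ofFinEmbEquiv_symm_iff_mem s a
      rw [this, mem_range_ofFinEmbEquiv_symm_iff_mem] at ha
      exact ha.symm
    subst hst
    simp only [Prod.mk.injEq, true_and]
    exact Equiv.ext fun i => (ofFinEmbEquiv.symm s).injective (congrFun h i)
  · rintro f - hf
    refine hF f fun hinj => hf ?_
    have hmono : StrictMono (f ∘ Tuple.sort f) :=
      (Tuple.monotone_sort f).strictMono_of_injective (hinj.comp (Tuple.sort f).injective)
    set s := ofFinEmb p I ⟨f, hinj⟩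
    refine ⟨(s, (Tuple.sort f)⁻¹), by simp, ?_⟩
    have : ⇑(ofFinEmbEquiv.symm s) = f ∘ Tuple.sort f := by
      rw [← (ofFinEmbEquiv.symm s).strictMono.range_inj hmono]
      ext a
      rw [Set.range_comp, Equiv.range_eq_univ, Set.image_univ, mem_range_ofFinEmbEquiv_symm_iff_mem,
        ← mem_coe_iff]
      exact mem_ofFinEmb_iff_mem_range p I ⟨f, hinj⟩ a
    funext i
    simp [this]

lemma wedgeL_eq_ιMulti {M : Type} [AddCommGroup M] [Module ℝ M] {n : ℕ} (v : Fin n → M) :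
    wedgeL v = ιMulti ℝ n v :=
  (ιMulti_apply v).symm

lemma wedgeL_cons {M : Type} [AddCommGroup M] [Module ℝ M] {n : ℕ} (x : M) (v : Fin n → M) :
    wedgeL (Fin.cons x v : Fin (n + 1) → M) = ι ℝ x * wedgeL v := by
  simp [wedgeL, List.ofFn_succ]

lemma coe_basisFun_eq_single (R η : Type*) [Semiring R] [Finite η] [DecidableEq η] :
    ⇑(Pi.basisFun R η) = fun i => Pi.single i 1 :=
  funext (Pi.basisFun_apply R η)

open Set.powersetCard in
theorem det_of_ite_ofFinEmbEquiv_symm {R I : Type*} [CommRing R] [LinearOrder I] (ε : I → R)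
    {p : ℕ} (s t : Set.powersetCard I p) :
    (Matrix.of fun i j => if ofFinEmbEquiv.symm s i = ofFinEmbEquiv.symm t j then
      ε (ofFinEmbEquiv.symm s i) else 0).det =
      if s = t then ∏ i, ε (ofFinEmbEquiv.symm s i) else 0 := by
  split_ifs with hst
  · subst hst
    rw [← Matrix.det_diagonal]
    congr
    ext i j
    simp
  · obtain ⟨a, hat, has⟩ := (exists_mem_notMem_iff_ne t s).mp (Ne.symm hst)
    obtain ⟨j, rfl⟩ := (mem_range_ofFinEmbEquiv_symm_iff_mem t a).mpr hat
    refine Matrix.det_eq_zero_of_column_eq_zero j fun i => if_neg fun h => has ?_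
    rw [← h, ← mem_range_ofFinEmbEquiv_symm_iff_mem]
    exact Set.mem_range_self i

namespace Set.powersetCard

lemma ofFinEmbEquiv_symm_eq_id {m : ℕ} (s : Set.powersetCard (Fin m) m) :
    ⇑(ofFinEmbEquiv.symm s) = id := by
  have hs : s.val = Finset.univ := Finset.eq_univ_of_card _ (by simp [card_eq s])
  exact (Finset.orderEmbOfFin_unique (card_eq s) (fun x => hs ▸ Finset.mem_univ x)
    strictMono_id).symm

lemma disjoint_iff_eq_compl {α : Type*} [Fintype α] [DecidableEq α] {k n : ℕ}
    (hkn : k + n = Fintype.card α) (s : Set.powersetCard α k) (t : Set.powersetCard α n) :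
    Disjoint s.val t.val ↔ t.val = s.valᶜ := by
  refine ⟨fun h => Finset.eq_of_subset_of_card_le (Finset.subset_compl_iff_disjoint_left.mpr h)
    ?_, fun h => h ▸ disjoint_compl_right⟩
  rw [Finset.card_compl, card_eq s, card_eq t]
  omega

end Set.powersetCard

namespace Omega

open Set.powersetCard

variable {U : Type} [AddCommGroup U] [Module ℝ U] {m : ℕ}

-- `θ^s ⊗ T_t`, each wedge taken in increasing index order
def monomial (u : Fin m → U) {p q : ℕ} (s : Set.powersetCard (Fin m) p)
    (t : Set.powersetCard (Fin m) q) : Omega U m :=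
  ιMulti_family ℝ p u s ⊗ₜ[ℝ] ιMulti_family ℝ q (fun a : Fin m => Pi.single a (1 : ℝ)) t

lemma solder_pow_eq_sum_tuples (u : Fin m → U) (p : ℕ) :
    solder u ^ p = ∑ f : Fin p → Fin m,
      wedgeL (u ∘ f) ⊗ₜ[ℝ] wedgeL ((fun a : Fin m => (Pi.single a 1 : Fin m → ℝ)) ∘ f) := by
  induction p with
  | zero => simp [wedgeL, Algebra.TensorProduct.one_def]
  | succ p ih =>
    rw [pow_succ', ih, solder, Finset.sum_mul_sum, ← (Fin.consEquiv fun _ => Fin m).sum_comp,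
      Fintype.sum_prod_type]
    simp [Fin.consEquiv, wedgeL_cons, Algebra.TensorProduct.tmul_mul_tmul, Fin.comp_cons]

lemma solder_pow (u : Fin m → U) (p : ℕ) :
    solder u ^ p = p.factorial • ∑ s : Set.powersetCard (Fin m) p, monomial u s s := by
  rw [solder_pow_eq_sum_tuples]
  refine sum_eq_factorial_smul_sum_powersetCard _ (fun f hf => ?_) (fun f π => ?_)
  · rw [wedgeL_eq_ιMulti, AlternatingMap.map_eq_zero_of_not_injective _ _
      fun h => hf (Function.Injective.of_comp h), TensorProduct.zero_tmul]
  · simp only [wedgeL_eq_ιMulti, ← Function.comp_assoc, AlternatingMap.map_perm]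
    rw [TensorProduct.smul_tmul, smul_smul, Int.units_mul_self, one_smul]

lemma monomial_mem_bideg (u : Fin m → U) {p q : ℕ} (s : Set.powersetCard (Fin m) p)
    (t : Set.powersetCard (Fin m) q) : monomial u s t ∈ bideg U m p q :=
  Submodule.apply_mem_map₂ _ (ιMulti_range ℝ p (Set.mem_range_self _))
    (ιMulti_range ℝ q (Set.mem_range_self _))

lemma solder_pow_mem_bideg (u : Fin m → U) (p : ℕ) : solder u ^ p ∈ bideg U m p p := by
  rw [solder_pow]
  exact Submodule.smul_of_tower_mem _ _ (Submodule.sum_mem _ fun s _ => monomial_mem_bideg u s s)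

section mul

variable (u : Fin m → U) {p q p' q' : ℕ} (s : Set.powersetCard (Fin m) p)
  (t : Set.powersetCard (Fin m) q) (s' : Set.powersetCard (Fin m) p')
  (t' : Set.powersetCard (Fin m) q')

lemma monomial_mul_monomial_of_disjoint (hs : Disjoint s.val s'.val) (ht : Disjoint t.val t'.val) :
    monomial u s t * monomial u s' t' =
      ((permOfDisjoint hs).sign * (permOfDisjoint ht).sign) •
        monomial u (disjUnion hs) (disjUnion ht) := by
  rw [monomial, monomial, Algebra.TensorProduct.tmul_mul_tmul,
    ιMulti_family_mul_of_disjoint ℝ u s s' hs, ιMulti_family_mul_of_disjoint ℝ _ t t' ht,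
    TensorProduct.smul_tmul, smul_smul, TensorProduct.tmul_smul]
  rfl

lemma monomial_mul_monomial_of_not_disjoint
    (h : ¬ Disjoint s.val s'.val ∨ ¬ Disjoint t.val t'.val) :
    monomial u s t * monomial u s' t' = 0 := by
  rw [monomial, monomial, Algebra.TensorProduct.tmul_mul_tmul]
  rcases h with h | h
  · rw [ιMulti_family_mul_of_not_disjoint ℝ u s s' h, TensorProduct.zero_tmul]
  · rw [ιMulti_family_mul_of_not_disjoint ℝ _ t t' h, TensorProduct.tmul_zero]

end mul

lemma monomial_top (u : Fin m → U) (s t : Set.powersetCard (Fin m) m) :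
    monomial u s t = vol u := by
  rw [monomial, vol, ιMulti_family, ιMulti_family, ofFinEmbEquiv_symm_eq_id,
    ofFinEmbEquiv_symm_eq_id, wedgeL_eq_ιMulti, wedgeL_eq_ιMulti]
  rfl

lemma monomial_ne_zero (u : Module.Basis (Fin m) ℝ U) {p q : ℕ} (s : Set.powersetCard (Fin m) p)
    (t : Set.powersetCard (Fin m) q) : monomial u s t ≠ 0 := by
  have h := (u.ExteriorAlgebra.tensorProduct (Pi.basisFun ℝ (Fin m)).ExteriorAlgebra).ne_zero
    (s.val, t.val)
  rwa [Module.Basis.tensorProduct_apply, basis_apply_powersetCard, basis_apply_powersetCard,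
    coe_basisFun_eq_single] at h

lemma vol_ne_zero (u : Module.Basis (Fin m) ℝ U) : vol u ≠ 0 := by
  rw [← monomial_top u (ofCard (Finset.card_fin m)) (ofCard (Finset.card_fin m))]
  exact monomial_ne_zero u _ _

lemma monomial_mul_monomial_of_add_eq (u : Fin m → U) {k n : ℕ} (hkn : k + n = m)
    (s t : Set.powersetCard (Fin m) k) (s' t' : Set.powersetCard (Fin m) n) :
    monomial u s t * monomial u s' t' =
      if h : Disjoint s.val s'.val ∧ Disjoint t.val t'.val then
        ((permOfDisjoint h.1).sign * (permOfDisjoint h.2).sign) • vol u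
      else 0 := by
  subst hkn
  split_ifs with h
  · rw [monomial_mul_monomial_of_disjoint u s t s' t' h.1 h.2, monomial_top]
  · exact monomial_mul_monomial_of_not_disjoint u s t s' t' (not_and_or.mp h)

lemma monomial_mul_solder_pow (u : Fin m → U) {k n : ℕ} (hkn : k + n = m)
    (s t : Set.powersetCard (Fin m) k) :
    monomial u s t * solder u ^ n = (if s = t then (n.factorial : ℝ) else 0) • vol u := by
  have hm : k + n = Fintype.card (Fin m) := by simpa using hkn
  have hdiag : ∑ r : Set.powersetCard (Fin m) n, monomial u s t * monomial u r r =
      if s = t then vol u else 0 := by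
    simp only [monomial_mul_monomial_of_add_eq u hkn, disjoint_iff_eq_compl hm]
    split_ifs with hst
    · subst hst
      rw [Finset.sum_eq_single (compl (by simp [← hkn, add_comm]) s)]
      · rw [dif_pos ⟨rfl, rfl⟩, Int.units_mul_self, one_smul]
      · intro r _ hr
        exact dif_neg fun h => hr (Subtype.ext h.1)
      · simp
    · refine Finset.sum_eq_zero fun r _ => dif_neg fun h => hst ?_
      exact Subtype.ext (compl_injective (h.1.symm.trans h.2))
  rw [solder_pow, mul_smul_comm, Finset.mul_sum, hdiag, ← Nat.cast_smul_eq_nsmul ℝ]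
  split_ifs <;> simp

lemma bideg_le_span_monomial (u : Module.Basis (Fin m) ℝ U) (p q : ℕ) :
    bideg U m p q ≤ Submodule.span ℝ
      (Set.range fun st : Set.powersetCard (Fin m) p × Set.powersetCard (Fin m) q =>
        monomial u st.1 st.2) := by
  have hW : Submodule.span ℝ (Set.range fun a : Fin m => (Pi.single a 1 : Fin m → ℝ)) = ⊤ := by
    rw [← coe_basisFun_eq_single, (Pi.basisFun ℝ (Fin m)).span_eq]
  rw [bideg, ← exteriorPower.ιMulti_family_span_fixedDegree_of_span ℝ u.span_eq,
    ← exteriorPower.ιMulti_family_span_fixedDegree_of_span ℝ hW, Submodule.map₂_span_span,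
    Submodule.span_le]
  rintro _ ⟨_, ⟨s, rfl⟩, _, ⟨t, rfl⟩, rfl⟩
  exact Submodule.subset_span ⟨(s, t), rfl⟩

lemma eq_zero_of_forall_monomial_mul_eq_zero (u : Module.Basis (Fin m) ℝ U) {k n : ℕ}
    (hkn : k + n = m) {X : Omega U m} (hX : X ∈ bideg U m n n)
    (h : ∀ s t : Set.powersetCard (Fin m) k, monomial u s t * X = 0) : X = 0 := by
  obtain ⟨y, rfl⟩ := (Submodule.mem_span_range_iff_exists_fun ℝ).mp
    (bideg_le_span_monomial u n n hX)
  suffices hy : ∀ st, y st = 0 by simp [hy]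
  rintro ⟨s', t'⟩
  have hm : k + n = Fintype.card (Fin m) := by simpa using hkn
  have key := h (compl hm s') (compl hm t')
  rw [Finset.mul_sum, Finset.sum_eq_single (s', t')] at key
  · have hdisj : ∀ r, Disjoint (compl hm r).val r.val :=
      fun r => (disjoint_iff_eq_compl hm _ _).mpr (by simp)
    rw [mul_smul_comm, monomial_mul_monomial_of_add_eq u hkn, dif_pos ⟨hdisj s', hdisj t'⟩,
      smul_eq_zero, smul_eq_zero_iff_eq] at key
    exact key.resolve_right (vol_ne_zero u)
  · rintro ⟨s'', t''⟩ - hne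
    rw [mul_smul_comm, monomial_mul_monomial_of_add_eq u hkn, dif_neg, smul_zero]
    rw [disjoint_iff_eq_compl hm, disjoint_iff_eq_compl hm, coe_compl, coe_compl, compl_compl,
      compl_compl]
    exact fun h => hne (Prod.ext (Subtype.ext h.1) (Subtype.ext h.2))
  · simp

lemma apply_monomial_monomial (u : Fin m → U) {k : ℕ} (P : Omega U m →ₗ[ℝ] Omega U m →ₗ[ℝ] ℝ)
    (g : U →ₗ[ℝ] U →ₗ[ℝ] ℝ) (η : (Fin m → ℝ) →ₗ[ℝ] (Fin m → ℝ) →ₗ[ℝ] ℝ) (ε : Fin m → ℝ)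
    (hg : ∀ a b, g (u a) (u b) = if a = b then ε a else 0)
    (hη : ∀ a b, η (Pi.single a 1) (Pi.single b 1) = if a = b then ε a else 0)
    (hP : ∀ (φ ψ : Fin k → U) (v w : Fin k → (Fin m → ℝ)),
      P (wedgeL φ ⊗ₜ[ℝ] wedgeL v) (wedgeL ψ ⊗ₜ[ℝ] wedgeL w) =
        Matrix.det (Matrix.of fun i j => g (φ i) (ψ j)) *
        Matrix.det (Matrix.of fun i j => η (v i) (w j)))
    (s s' t t' : Set.powersetCard (Fin m) k) :
    P (monomial u s s') (monomial u t t') =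
      (if s = t then ∏ i, ε (ofFinEmbEquiv.symm s i) else 0) *
        (if s' = t' then ∏ i, ε (ofFinEmbEquiv.symm s' i) else 0) := by
  simp only [monomial, ιMulti_family, ← wedgeL_eq_ιMulti, hP, Function.comp_apply, hg, hη,
    det_of_ite_ofFinEmbEquiv_symm]

lemma apply_monomial_solder_pow (u : Fin m → U) {k : ℕ}
    (P : Omega U m →ₗ[ℝ] Omega U m →ₗ[ℝ] ℝ) (χ : Set.powersetCard (Fin m) k → ℝ)
    (hχ : ∀ s, χ s * χ s = 1)
    (hP : ∀ s s' t t', P (monomial u s s') (monomial u t t') =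
      (if s = t then χ s else 0) * (if s' = t' then χ s' else 0))
    (s t : Set.powersetCard (Fin m) k) :
    P (monomial u s t) (solder u ^ k) = if s = t then (k.factorial : ℝ) else 0 := by
  simp only [solder_pow, map_nsmul, map_sum, hP, ite_mul, zero_mul, mul_ite, mul_zero,
    Finset.sum_ite_eq, Finset.mem_univ, if_true]
  split_ifs with hst
  · rw [← hst, hχ, nsmul_eq_mul, mul_one]
  · exact smul_zero _

end Omega

open Omega Set.powersetCard

theorem stmt_7_general (m s k : ℕ) (hk : k ≤ m)
    (U : Type) [AddCommGroup U] [Module ℝ U]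
    (η : (Fin m → ℝ) →ₗ[ℝ] (Fin m → ℝ) →ₗ[ℝ] ℝ)
    (hη : ∀ v w, η v w = ∑ a : Fin _, (if (a : ℕ) < s then (-1 : ℝ) else 1) * v a * w a)
    (g : U →ₗ[ℝ] U →ₗ[ℝ] ℝ) (u : Module.Basis (Fin m) ℝ U)
    (hg : ∀ a b, g (u a) (u b) = if a = b then (if (a : ℕ) < s then (-1 : ℝ) else 1) else 0)
    (P : Omega U m →ₗ[ℝ] Omega U m →ₗ[ℝ] ℝ)
    (hP : ∀ (k h : ℕ) (φ ψ : Fin k → U) (v w : Fin h → (Fin m → ℝ)),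
      P (wedgeL φ ⊗ₜ[ℝ] wedgeL v) (wedgeL ψ ⊗ₜ[ℝ] wedgeL w) =
        Matrix.det (Matrix.of fun i j => g (φ i) (ψ j)) *
        Matrix.det (Matrix.of fun i j => η (v i) (w j)))
    (S : Module.End ℝ (Omega U m))
    (hS_mem : ∀ x ∈ bideg U m k k, S x ∈ bideg U m (m - k) (m - k))
    (hS : ∀ Φ Ψ, Φ ∈ bideg U m k k → Ψ ∈ bideg U m k k →
      Φ * S Ψ = P Φ Ψ • vol (fun a => u a)) :
    S ((solder (fun a => u a)) ^ k) =
      ((Nat.factorial k : ℝ) / (Nat.factorial (m - k) : ℝ)) •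
        (solder (fun a => u a)) ^ (m - k) := by
  set ε : Fin m → ℝ := fun a => if (a : ℕ) < s then -1 else 1
  have hε : ∀ a, ε a * ε a = 1 := fun a => by simp only [ε]; split_ifs <;> norm_num
  have hηε : ∀ a b : Fin m, η (Pi.single a 1) (Pi.single b 1) = if a = b then ε a else 0 := by
    intro a b
    rw [hη, Finset.sum_eq_single a (fun c _ hc => by simp [hc]) (by simp)]
    by_cases hab : a = b <;> simp [hab, ε]
  have hχ : ∀ σ : Set.powersetCard (Fin m) k,
      (∏ i, ε (ofFinEmbEquiv.symm σ i)) * ∏ i, ε (ofFinEmbEquiv.symm σ i) = 1 := fun σ => by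
    rw [← Finset.prod_mul_distrib, Finset.prod_eq_one fun i _ => hε _]
  have hSθ : ∀ σ τ : Set.powersetCard (Fin m) k, monomial u σ τ * S (solder u ^ k) =
      (if σ = τ then (k.factorial : ℝ) else 0) • vol u := fun σ τ => by
    rw [hS _ _ (monomial_mem_bideg _ σ τ) (solder_pow_mem_bideg _ k),
      apply_monomial_solder_pow _ P _ hχ (apply_monomial_monomial _ P g η ε hg hηε (hP k k))]
  have hkn : k + (m - k) = m := Nat.add_sub_cancel' hk
  refine sub_eq_zero.mp (eq_zero_of_forall_monomial_mul_eq_zero u hkn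
    (sub_mem (hS_mem _ (solder_pow_mem_bideg _ k))
      (Submodule.smul_mem _ _ (solder_pow_mem_bideg _ _))) fun σ τ => ?_)
  rw [mul_sub, mul_smul_comm, hSθ, monomial_mul_solder_pow _ hkn, smul_smul, ← sub_smul]
  split_ifs <;> simp [Nat.factorial_ne_zero]

/-- Composite Hodge dual of the `k`-th power of the solder form:
`⋆̄(θ^k) = (k!/(m−k)!) θ^{m−k}`. -/
theorem stmt_7 (m r s k : ℕ) (hm : r + s = m) (hk : k ≤ m)
    (U : Type) [AddCommGroup U] [Module ℝ U]
    (η : (Fin m → ℝ) →ₗ[ℝ] (Fin m → ℝ) →ₗ[ℝ] ℝ)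
    (hη : ∀ v w, η v w = ∑ a : Fin _, (if (a : ℕ) < s then (-1 : ℝ) else 1) * v a * w a)
    (g : U →ₗ[ℝ] U →ₗ[ℝ] ℝ) (u : Module.Basis (Fin m) ℝ U)
    (hg : ∀ a b, g (u a) (u b) = if a = b then (if (a : ℕ) < s then (-1 : ℝ) else 1) else 0)
    (P : Omega U m →ₗ[ℝ] Omega U m →ₗ[ℝ] ℝ)
    (hP : ∀ (k h : ℕ) (φ ψ : Fin k → U) (v w : Fin h → (Fin m → ℝ)),
      P (wedgeL φ ⊗ₜ[ℝ] wedgeL v) (wedgeL ψ ⊗ₜ[ℝ] wedgeL w) =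
        Matrix.det (Matrix.of fun i j => g (φ i) (ψ j)) *
        Matrix.det (Matrix.of fun i j => η (v i) (w j)))
    (S : Module.End ℝ (Omega U m))
    (hS_mem : ∀ x ∈ bideg U m k k, S x ∈ bideg U m (m - k) (m - k))
    (hS : ∀ Φ Ψ, Φ ∈ bideg U m k k → Ψ ∈ bideg U m k k →
      Φ * S Ψ = P Φ Ψ • vol (fun a => u a)) :
    S ((solder (fun a => u a)) ^ k) =
      ((Nat.factorial k : ℝ) / (Nat.factorial (m - k) : ℝ)) •
        (solder (fun a => u a)) ^ (m - k) :=
  stmt_7_general m s k hk U η hη g u hg P hP S hS_mem hS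
end
end

section
/- If m = 2n is even, then θ^n is self-dual under the composite Hodge operator: ⋆̄(θ^n) = θ^n; moreover ∗_g(θ^n) = (−1)^s (−1)^{n²} ★_h(θ^n). -/
open TensorProduct ExteriorAlgebra

noncomputable section

/-! Expanding the power over `n`-tuples of indices, non-injective tuples vanish and reordering an
injective tuple produces the same sign in both tensor factors, so `θ^n = n! ∑_{|S| = n} e_S ⊗ f_S`
with `e_S`, `f_S` the sorted wedges of the two bases. An `n`-form is determined by its wedge
products with the `e_{Tᶜ}`, read off on the top basis element; this gives
`∗ e_S = ε_S κ_{Sᶜ} e_{Sᶜ}`, where `ε_S` is the product of the metric signs over `S` and `κ_T` the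
sign of the shuffle `(Tᶜ, T)`. Both Hodge stars act on the sorted wedges with the same
coefficient, which squares to `1`, so `⋆̄ (e_S ⊗ f_S) = e_{Sᶜ} ⊗ f_{Sᶜ}` and `S ↦ Sᶜ` permutes
the summands. For the second identity, `ε_S ε_{Sᶜ} = (-1)^s`, and graded commutativity gives
`κ_{Sᶜ} = (-1)^{n²} κ_S`. -/

open Set.powersetCard

namespace ExteriorAlgebra

variable {R M : Type*} [CommRing R] [AddCommGroup M] [Module R M]

theorem ι_mul_ιMulti_comm {l : ℕ} (x : M) (c : Fin l → M) :
    ι R x * ιMulti R l c = (-1 : R) ^ l • (ιMulti R l c * ι R x) := by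
  induction l with
  | zero => simp
  | succ l ih =>
    rw [ιMulti_succ_apply, ← mul_assoc, eq_neg_of_add_eq_zero_left (ι_add_mul_swap x (c 0)),
      neg_mul, mul_assoc, ih, mul_smul_comm, ← mul_assoc, pow_succ, mul_neg_one, neg_smul]

theorem ιMulti_mul_ιMulti_comm {k l : ℕ} (a : Fin k → M) (c : Fin l → M) :
    ιMulti R k a * ιMulti R l c = (-1 : R) ^ (k * l) • (ιMulti R l c * ιMulti R k a) := by
  induction k with
  | zero => simp
  | succ k ih =>
    rw [ιMulti_succ_apply, mul_assoc, ih, mul_smul_comm, ← mul_assoc, ι_mul_ιMulti_comm,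
      smul_mul_assoc, smul_smul, mul_assoc, ← pow_add, Nat.succ_mul]

theorem basis_univ_eq_ιMulti {m : ℕ} (b : Module.Basis (Fin m) R M) :
    b.ExteriorAlgebra Finset.univ = ιMulti R m b := by
  have hcard : (Finset.univ : Finset (Fin m)).card = m := Finset.card_fin m
  have hid : ⇑(Finset.univ.orderEmbOfFin hcard) = id :=
    (Finset.orderEmbOfFin_unique hcard (fun _ => Finset.mem_univ _) strictMono_id).symm
  rw [basis_apply_ofCard b hcard, ιMulti_family, ofFinEmbEquiv_symm_apply]
  exact congrArg (ιMulti R m ∘ (⇑b ∘ ·)) hid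

end ExteriorAlgebra

theorem Finset.sum_filter_injective_eq_sum_powersetCard {I E : Type*} [Fintype I]
    [LinearOrder I] [AddCommMonoid E] {k : ℕ} (F : (Fin k → I) → E) :
    ∑ v with Function.Injective v, F v =
      ∑ S : Set.powersetCard I k, ∑ σ : Equiv.Perm (Fin k), F (ofFinEmbEquiv.symm S ∘ σ) := by
  have range_emb (S : Set.powersetCard I k) :
      Set.range (ofFinEmbEquiv.symm S) = (S : Set I) :=
    Set.ext (mem_range_ofFinEmbEquiv_symm_iff_mem S)
  rw [← Fintype.sum_prod_type']
  symm
  refine Finset.sum_bij (fun p _ => ofFinEmbEquiv.symm p.1 ∘ p.2) ?_ ?_ ?_ (fun _ _ => rfl)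
  · intro p _
    simpa using (ofFinEmbEquiv.symm p.1).injective.comp p.2.injective
  · rintro ⟨S, σ⟩ - ⟨T, τ⟩ - h
    have hST : S = T := by
      have := congrArg Set.range h
      rw [σ.surjective.range_comp, τ.surjective.range_comp, range_emb, range_emb] at this
      exact SetLike.coe_injective this
    subst hST
    simpa using Equiv.ext fun i => (ofFinEmbEquiv.symm S).injective (congrFun h i)
  · intro v hv
    have hv : Function.Injective v := (Finset.mem_filter.mp hv).2
    set S := ofFinEmb k I ⟨v, hv⟩
    have hrange : Set.range v = Set.range (ofFinEmbEquiv.symm S) := by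
      rw [range_emb, coe_ofFinEmb]; rfl
    refine ⟨(S, (Equiv.ofInjective v hv).trans ((Equiv.setCongr hrange).trans
      (Equiv.ofInjective _ (ofFinEmbEquiv.symm S).injective).symm)), Finset.mem_univ _,
      funext fun i => ?_⟩
    simp [Equiv.apply_ofInjective_symm]

section PowerOfSumOfTensors

variable {R M N I : Type*} [CommRing R] [AddCommGroup M] [Module R M] [AddCommGroup N]
  [Module R N] [Fintype I]

theorem sum_ι_tmul_ι_pow (x : I → M) (y : I → N) (k : ℕ) :
    (∑ a, ι R (x a) ⊗ₜ[R] ι R (y a)) ^ k =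
      ∑ v : Fin k → I, ιMulti R k (x ∘ v) ⊗ₜ[R] ιMulti R k (y ∘ v) := by
  induction k with
  | zero => simp [Algebra.TensorProduct.one_def]
  | succ k ih =>
    rw [pow_succ', ih, Finset.sum_mul_sum, ← Fintype.sum_prod_type',
      ← (Fin.consEquiv fun _ : Fin (k + 1) => I).sum_comp]
    refine Fintype.sum_congr _ _ fun p => ?_
    simp [Algebra.TensorProduct.tmul_mul_tmul, Fin.consEquiv, Matrix.vecTail, Function.comp_def]

theorem sum_ιMulti_tmul_ιMulti [LinearOrder I] (x : I → M) (y : I → N) (k : ℕ) :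
    ∑ v : Fin k → I, ιMulti R k (x ∘ v) ⊗ₜ[R] ιMulti R k (y ∘ v) =
      k.factorial • ∑ S : Set.powersetCard I k,
        ιMulti_family R k x S ⊗ₜ[R] ιMulti_family R k y S := by
  have sorted_perm (S : Set.powersetCard I k) (σ : Equiv.Perm (Fin k)) :
      ιMulti R k (x ∘ (ofFinEmbEquiv.symm S ∘ σ)) ⊗ₜ[R]
          ιMulti R k (y ∘ (ofFinEmbEquiv.symm S ∘ σ)) =
        ιMulti_family R k x S ⊗ₜ[R] ιMulti_family R k y S := by
    rw [← Function.comp_assoc, ← Function.comp_assoc, AlternatingMap.map_perm,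
      AlternatingMap.map_perm]
    rcases Int.units_eq_one_or (Equiv.Perm.sign σ) with h | h <;> simp [h, neg_tmul, tmul_neg]
  rw [← Finset.sum_filter_of_ne (p := Function.Injective),
    Finset.sum_filter_injective_eq_sum_powersetCard, Finset.smul_sum]
  · simp [sorted_perm, Fintype.card_perm]
  · intro v _ hv
    contrapose hv
    rw [ιMulti_eq_zero_of_not_inj fun h => hv h.of_comp, zero_tmul]

end PowerOfSumOfTensors

section HodgeStar

variable {R I M : Type*} [CommRing R] [LinearOrder I] [AddCommGroup M] [Module R M]
  (b : Module.Basis I R M) {n : ℕ}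

theorem det_gram_sorted_basis (ε : I → R) (g : M →ₗ[R] M →ₗ[R] R)
    (hg : ∀ a c, g (b a) (b c) = if a = c then ε a else 0) (S T : Set.powersetCard I n) :
    (Matrix.of fun i j => g ((b ∘ ofFinEmbEquiv.symm S) i) ((b ∘ ofFinEmbEquiv.symm T) j)).det =
      if S = T then ∏ a ∈ S.val, ε a else 0 := by
  split_ifs with hST
  · subst hST
    have hdiag : (Matrix.of fun i j => g ((b ∘ ofFinEmbEquiv.symm S) i)
        ((b ∘ ofFinEmbEquiv.symm S) j)) = Matrix.diagonal (ε ∘ ofFinEmbEquiv.symm S) := by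
      ext i j
      simp [hg, Matrix.diagonal_apply]
    rw [hdiag, Matrix.det_diagonal, ← Finset.prod_coe_sort S.val,
      ← (orderIsoOfFin S).toEquiv.prod_comp]
    rfl
  · obtain ⟨a, haS, haT⟩ := (exists_mem_notMem_iff_ne S T).mp hST
    obtain ⟨i, rfl⟩ := (mem_range_ofFinEmbEquiv_symm_iff_mem S a).mpr haS
    refine Matrix.det_eq_zero_of_row_eq_zero i fun j => ?_
    have hne : ofFinEmbEquiv.symm S i ≠ ofFinEmbEquiv.symm T j := fun h =>
      haT (h ▸ (mem_range_ofFinEmbEquiv_symm_iff_mem T _).mp ⟨j, rfl⟩)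
    simp [hg, hne]

variable [Fintype I] (hn : n + n = Fintype.card I)

def topCoord : ExteriorAlgebra R M →ₗ[R] R :=
  b.ExteriorAlgebra.coord Finset.univ

theorem topCoord_basis_univ : topCoord b (b.ExteriorAlgebra Finset.univ) = 1 := by
  simp [topCoord]

variable (R) in
def complSign (S : Set.powersetCard I n) : R :=
  ((permOfDisjoint (s := compl hn S) (t := S) disjoint_compl_left).sign : ℤ)

theorem complSign_mul_self (S : Set.powersetCard I n) :
    complSign R hn S * complSign R hn S = 1 := by
  rw [complSign, ← Int.cast_mul, ← Units.val_mul, Int.units_mul_self, Units.val_one, Int.cast_one]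

theorem compl_compl_powersetCard (S : Set.powersetCard I n) : compl hn (compl hn S) = S :=
  (compl hn).symm_apply_apply S

theorem topCoord_compl_mul (S T : Set.powersetCard I n) :
    topCoord b (ιMulti_family R n b (compl hn S) * ιMulti_family R n b T) =
      if T = S then complSign R hn S else 0 := by
  by_cases hd : Disjoint (compl hn S).val T.val
  · rw [ιMulti_family_mul_of_disjoint R b _ _ hd, ← basis_apply_powersetCard, Units.smul_def,
      map_zsmul, topCoord, Module.Basis.coord_apply, Module.Basis.repr_self, Finsupp.single_apply]
    by_cases hTS : T = S
    · subst hTS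
      have hunion : Finset.univ = ((disjUnion hd : Set.powersetCard I (n + n)) : Finset I) := by
        ext a
        simp [em']
      simp [hunion, complSign]
    · obtain ⟨a, haS, haT⟩ := (exists_mem_notMem_iff_ne S T).mp (Ne.symm hTS)
      have hunion : (S : Finset I)ᶜ ∪ T ≠ Finset.univ := fun h => by
        have ha := Finset.mem_univ a
        rw [← h, Finset.mem_union, Finset.mem_compl] at ha
        exact ha.elim (· haS) haT
      simp [hunion, hTS]
  · rw [ιMulti_family_mul_of_not_disjoint R b _ _ hd, map_zero, if_neg]
    rintro rfl
    exact hd disjoint_compl_left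

theorem complSign_compl (S : Set.powersetCard I n) :
    complSign R hn (compl hn S) = (-1) ^ (n * n) * complSign R hn S := by
  have h₁ := topCoord_compl_mul (Pi.basisFun R I) hn (compl hn S) (compl hn S)
  have h₂ := topCoord_compl_mul (Pi.basisFun R I) hn S S
  rw [compl_compl_powersetCard, if_pos rfl] at h₁
  rw [if_pos rfl] at h₂
  rw [← h₁, ← h₂, ιMulti_mul_ιMulti_comm, map_smul, smul_eq_mul]

theorem eq_zero_of_topCoord_compl_mul {x : ExteriorAlgebra R M} (hx : x ∈ ⋀[R]^n M)
    (h : ∀ T, topCoord b (ιMulti_family R n b (compl hn T) * x) = 0) : x = 0 := by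
  set c := (b.exteriorPower n).repr ⟨x, hx⟩
  have hsum : x = ∑ T, c T • ιMulti_family R n b T := by
    simpa [exteriorPower.basis_apply] using
      congrArg Subtype.val ((b.exteriorPower n).sum_repr ⟨x, hx⟩).symm
  have hc (T : Set.powersetCard I n) : c T = 0 := by
    have hT := h T
    simp only [hsum, Finset.mul_sum, mul_smul_comm, map_sum, map_smul, topCoord_compl_mul,
      smul_eq_mul, mul_ite, mul_zero, Finset.sum_ite_eq', Finset.mem_univ, if_true] at hT
    calc c T = c T * (complSign R hn T * complSign R hn T) := by rw [complSign_mul_self, mul_one]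
      _ = 0 := by rw [← mul_assoc, hT, zero_mul]
  have : (⟨x, hx⟩ : ⋀[R]^n M) = 0 := (b.exteriorPower n).ext_elem_iff.mpr (by simpa using hc)
  exact congrArg Subtype.val this

theorem hodge_ιMulti_family (ε : I → R) (g : M →ₗ[R] M →ₗ[R] R)
    (hg : ∀ a c, g (b a) (b c) = if a = c then ε a else 0)
    (G : ExteriorAlgebra R M →ₗ[R] ExteriorAlgebra R M →ₗ[R] R)
    (hG : ∀ φ ψ : Fin n → M,
      G (ιMulti R n φ) (ιMulti R n ψ) = (Matrix.of fun i j => g (φ i) (ψ j)).det)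
    (st : Module.End R (ExteriorAlgebra R M)) (hmem : ∀ x ∈ ⋀[R]^n M, st x ∈ ⋀[R]^n M)
    (hst : ∀ x y, x ∈ ⋀[R]^n M → y ∈ ⋀[R]^n M → x * st y = G x y • b.ExteriorAlgebra Finset.univ)
    (S : Set.powersetCard I n) :
    st (ιMulti_family R n b S) =
      ((∏ a ∈ S.val, ε a) * complSign R hn (compl hn S)) • ιMulti_family R n b (compl hn S) := by
  have mem (T : Set.powersetCard I n) : ιMulti_family R n b T ∈ ⋀[R]^n M :=
    ιMulti_range R n ⟨_, rfl⟩
  rw [← sub_eq_zero]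
  refine eq_zero_of_topCoord_compl_mul b hn
    (sub_mem (hmem _ (mem S)) (Submodule.smul_mem _ _ (mem _))) fun T => ?_
  rw [mul_sub, mul_smul_comm, map_sub, map_smul, hst _ _ (mem _) (mem S), map_smul,
    topCoord_basis_univ, hG, det_gram_sorted_basis b ε g hg, topCoord_compl_mul]
  by_cases hT : T = compl hn S
  · subst hT
    simp [compl_compl_powersetCard, mul_assoc, complSign_mul_self]
  · have hT' : compl hn T ≠ S := fun h => hT (h ▸ (compl_compl_powersetCard hn T).symm)
    simp [hT', Ne.symm hT]

end HodgeStar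

section SumOfPairedEigenvectors

variable {R α A B : Type*} [CommRing R] [Fintype α] [AddCommGroup A] [Module R A]
  [AddCommGroup B] [Module R B] {σ : Equiv.Perm α} {c : α → R} {x : α → A} {y : α → B}
  {f : Module.End R A} {f' : Module.End R B}

theorem map_map_sum_tmul_eq_self (hf : ∀ S, f (x S) = c S • x (σ S))
    (hf' : ∀ S, f' (y S) = c S • y (σ S)) (hc : ∀ S, c S * c S = 1) :
    map f LinearMap.id (map LinearMap.id f' (∑ S, x S ⊗ₜ[R] y S)) = ∑ S, x S ⊗ₜ[R] y S := by
  simp only [map_sum, map_tmul, LinearMap.id_apply, hf, hf', smul_tmul_smul, hc, one_smul]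
  exact Equiv.sum_comp σ fun S => x S ⊗ₜ[R] y S

theorem map_sum_tmul_eq_smul (hσ : Function.Involutive σ) (hf : ∀ S, f (x S) = c S • x (σ S))
    (hf' : ∀ S, f' (y S) = c S • y (σ S)) (l : R) (hc : ∀ S, c S = l * c (σ S)) :
    map f LinearMap.id (∑ S, x S ⊗ₜ[R] y S) = l • map LinearMap.id f' (∑ S, x S ⊗ₜ[R] y S) := by
  simp only [map_sum, map_tmul, LinearMap.id_apply, hf, hf', Finset.smul_sum]
  rw [← Equiv.sum_comp σ fun S => l • x S ⊗ₜ[R] (c S • y (σ S))]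
  refine Fintype.sum_congr _ _ fun S => ?_
  rw [hσ S, hc S, tmul_smul, smul_smul, smul_tmul']

end SumOfPairedEigenvectors

def signature (R : Type*) [Ring R] (s : ℕ) {m : ℕ} (a : Fin m) : R :=
  if (a : ℕ) < s then -1 else 1

theorem signature_mul_self {R : Type*} [Ring R] (s : ℕ) {m : ℕ} (a : Fin m) :
    signature R s a * signature R s a = 1 := by
  unfold signature
  split_ifs <;> simp

theorem prod_signature {R : Type*} [CommRing R] {s m : ℕ} (hs : s ≤ m) :
    ∏ a : Fin m, signature R s a = (-1) ^ s := by
  unfold signature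
  simp [Finset.prod_ite, Fin.card_filter_val_lt, hs]

section HodgeSign

variable {R : Type*} [CommRing R] {s m n : ℕ} (hn : n + n = Fintype.card (Fin m))

variable (R s) in
def hodgeSign (S : Set.powersetCard (Fin m) n) : R :=
  (∏ a ∈ S.val, signature R s a) * complSign R hn (compl hn S)

theorem hodgeSign_mul_self (S : Set.powersetCard (Fin m) n) :
    hodgeSign R s hn S * hodgeSign R s hn S = 1 := by
  rw [hodgeSign, mul_mul_mul_comm, ← Finset.prod_mul_distrib, complSign_mul_self, mul_one]
  exact Finset.prod_eq_one fun a _ => signature_mul_self s a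

theorem hodgeSign_eq_mul_hodgeSign_compl (hs : s ≤ m) (S : Set.powersetCard (Fin m) n) :
    hodgeSign R s hn S = ((-1) ^ s * (-1) ^ (n * n)) * hodgeSign R s hn (compl hn S) := by
  have hprod := Finset.prod_mul_prod_compl S.val (signature R s)
  rw [prod_signature hs] at hprod
  have hsq : (∏ a ∈ S.valᶜ, signature R s a) * ∏ a ∈ S.valᶜ, signature R s a = 1 := by
    rw [← Finset.prod_mul_distrib]
    exact Finset.prod_eq_one fun a _ => signature_mul_self s a
  rw [hodgeSign, hodgeSign, compl_compl_powersetCard, complSign_compl, coe_compl]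
  linear_combination (-1 : R) ^ (n * n) * complSign R hn S *
    ((∏ a ∈ S.valᶜ, signature R s a) * hprod - (∏ a ∈ S.val, signature R s a) * hsq)

end HodgeSign

/-- If `m = 2n`, the power `θ^n` is self-dual for the composite Hodge operator
`⋆̄ = ∗_g ∘ ★_h`, and `∗_g(θ^n) = (−1)^s (−1)^{n²} ★_h(θ^n)`. -/
theorem stmt_8 (m r s n : ℕ) (hm : r + s = m) (hmn : m = 2 * n)
    (U : Type) [AddCommGroup U] [Module ℝ U]
    (η : (Fin m → ℝ) →ₗ[ℝ] (Fin m → ℝ) →ₗ[ℝ] ℝ)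
    (hη : ∀ v w, η v w = ∑ a : Fin _, (if (a : ℕ) < s then (-1 : ℝ) else 1) * v a * w a)
    (g : U →ₗ[ℝ] U →ₗ[ℝ] ℝ) (u : Module.Basis (Fin m) ℝ U)
    (hg : ∀ a b, g (u a) (u b) = if a = b then (if (a : ℕ) < s then (-1 : ℝ) else 1) else 0)
    (G : ExteriorAlgebra ℝ U →ₗ[ℝ] ExteriorAlgebra ℝ U →ₗ[ℝ] ℝ)
    (hG : ∀ (p : ℕ) (φ ψ : Fin p → U),
      G (wedgeL φ) (wedgeL ψ) = Matrix.det (Matrix.of fun i j => g (φ i) (ψ j)))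
    (H : ExteriorAlgebra ℝ (Fin m → ℝ) →ₗ[ℝ] ExteriorAlgebra ℝ (Fin m → ℝ) →ₗ[ℝ] ℝ)
    (hH : ∀ (p : ℕ) (v w : Fin p → (Fin m → ℝ)),
      H (wedgeL v) (wedgeL w) = Matrix.det (Matrix.of fun i j => η (v i) (w j)))
    (starU : Module.End ℝ (ExteriorAlgebra ℝ U))
    (hstarU_mem : ∀ x ∈ ⋀[ℝ]^n U, starU x ∈ ⋀[ℝ]^n U)
    (hstarU : ∀ a b, a ∈ ⋀[ℝ]^n U → b ∈ ⋀[ℝ]^n U →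
      a * starU b = G a b • wedgeL (fun a => u a))
    (starW : Module.End ℝ (ExteriorAlgebra ℝ (Fin m → ℝ)))
    (hstarW_mem : ∀ x ∈ ⋀[ℝ]^n (Fin m → ℝ), starW x ∈ ⋀[ℝ]^n (Fin m → ℝ))
    (hstarW : ∀ a b, a ∈ ⋀[ℝ]^n (Fin m → ℝ) → b ∈ ⋀[ℝ]^n (Fin m → ℝ) →
      a * starW b = H a b • wedgeL (fun a : Fin m => Pi.single a (1 : ℝ))) :
    TensorProduct.map starU LinearMap.id
        (TensorProduct.map LinearMap.id starW ((solder (fun a => u a)) ^ n)) =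
      (solder (fun a => u a)) ^ n ∧
    TensorProduct.map starU LinearMap.id ((solder (fun a => u a)) ^ n) =
      ((-1 : ℝ) ^ s * (-1 : ℝ) ^ (n * n)) •
        TensorProduct.map LinearMap.id starW ((solder (fun a => u a)) ^ n) := by
  have hn : n + n = Fintype.card (Fin m) := by rw [Fintype.card_fin]; omega
  let bW := Pi.basisFun ℝ (Fin m)
  have hbW : ∀ a : Fin m, (Pi.single a 1 : Fin m → ℝ) = bW a :=
    fun a => (Pi.basisFun_apply ℝ (Fin m) a).symm
  have hηbW : ∀ a c, η (bW a) (bW c) = if a = c then signature ℝ s a else 0 := by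
    intro a c
    by_cases hac : a = c
    · simp [bW, hη, Pi.single_apply, hac, signature]
    · simp [bW, hη, Pi.single_apply, hac, Ne.symm hac]
  have hstarU_basis := hodge_ιMulti_family u hn (signature ℝ s) g hg G (hG n) starU hstarU_mem
    fun x y hx hy => by rw [hstarU x y hx hy, basis_univ_eq_ιMulti]; rfl
  have hstarW_basis := hodge_ιMulti_family bW hn (signature ℝ s) η hηbW H (hH n) starW
    hstarW_mem fun x y hx hy => by
      rw [hstarW x y hx hy, basis_univ_eq_ιMulti]; simp only [hbW]; rfl
  have hθ : solder (fun a => u a) ^ n = n.factorial • ∑ S : Set.powersetCard (Fin m) n,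
      ιMulti_family ℝ n u S ⊗ₜ[ℝ] ιMulti_family ℝ n bW S := by
    simp only [solder, hbW]
    rw [sum_ι_tmul_ι_pow, sum_ιMulti_tmul_ιMulti]
  simp only [hθ, map_nsmul]
  refine ⟨congrArg _ (map_map_sum_tmul_eq_self hstarU_basis hstarW_basis (hodgeSign_mul_self hn)),
    ?_⟩
  rw [smul_comm, map_sum_tmul_eq_smul (compl_compl_powersetCard hn) hstarU_basis hstarW_basis _
    (hodgeSign_eq_mul_hodgeSign_compl hn (by omega))]
end
end

section
/- If k + h > m, the trace map tr: Λ^k V* ⊗ Λ^h W → Λ^{k−1} V* ⊗ Λ^{h−1} W is injective; moreover tr Φ = 0 implies θ^i ⩕ Φ = 0 for all i = 0,…,min{m−k, m−h}. -/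
open TensorProduct ExteriorAlgebra

noncomputable section

/-- The trace operator: contraction with `θ^♯`, i.e. `tr Φ = Σ_a (ι_{(u a)^♯} ⊗ ι_{(T a)^♭}) Φ`. -/
def trOp {U : Type} [AddCommGroup U] [Module ℝ U] {m : ℕ} (u : Fin m → U)
    (cU : U → Module.End ℝ (ExteriorAlgebra ℝ U))
    (cW : (Fin m → ℝ) → Module.End ℝ (ExteriorAlgebra ℝ (Fin m → ℝ))) :
    Module.End ℝ (Omega U m) :=
  ∑ a, TensorProduct.map (cU (u a)) (cW (Pi.single a 1))

/-! On bidegree `(k, h)` the trace and multiplication by the solder form `θ` satisfy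
`tr (θ Φ) = (m - k - h) Φ + θ (tr Φ)`: expanding with the anticommutation relation
`c x (ι y * w) = B x y • w - ι y * c x w`, the cross terms are the number operators
`Σ ε_a ι(e_a) c(e_a)` of the two factors, which act as `k` and `h`. Iterating,
`tr (θ^{i+1} Φ) = (i+1)(m-k-h-i) θ^i Φ + θ^{i+1} tr Φ`. When `k + h > m` these coefficients
never vanish, so if `tr Φ = 0` then `θ^{i+1} Φ = 0` forces `θ^i Φ = 0`; as `θ^i Φ` eventually
has form degree above `dim U`, descending induction gives `Φ = 0`. -/

def IsInteriorProduct {M : Type} [AddCommGroup M] [Module ℝ M] (B : M →ₗ[ℝ] M →ₗ[ℝ] ℝ)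
    (c : M → Module.End ℝ (ExteriorAlgebra ℝ M)) : Prop :=
  ∀ (x : M) (n : ℕ) (v : Fin n → M),
    c x (wedgeL v) = ∑ i : Fin n, ((-1 : ℝ) ^ (i : ℕ) * B x (v i)) •
      ((List.ofFn fun j => ι ℝ (v j)).eraseIdx (i : ℕ)).prod

namespace IsInteriorProduct

variable {M : Type} [AddCommGroup M] [Module ℝ M] {B : M →ₗ[ℝ] M →ₗ[ℝ] ℝ}
  {c : M → Module.End ℝ (ExteriorAlgebra ℝ M)}

theorem apply_one (hc : IsInteriorProduct B c) (x : M) : c x 1 = 0 := by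
  simpa [wedgeL] using hc x 0 Fin.elim0

theorem apply_ι_mul_wedgeL (hc : IsInteriorProduct B c) (x y : M) {n : ℕ} (v : Fin n → M) :
    c x (ι ℝ y * wedgeL v) = B x y • wedgeL v - ι ℝ y * c x (wedgeL v) := by
  have hcons : ι ℝ y * wedgeL v = wedgeL (Fin.cons y v : Fin (n + 1) → M) := by
    simp [wedgeL, List.ofFn_succ]
  rw [hcons, hc, hc, Finset.mul_sum, Fin.sum_univ_succ, sub_eq_add_neg, ← Finset.sum_neg_distrib]
  simp only [wedgeL, List.ofFn_succ, Fin.cons_zero, Fin.cons_succ, Fin.val_zero, pow_zero, one_mul,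
    List.eraseIdx_cons_zero, Fin.val_succ, List.eraseIdx_cons_succ, List.prod_cons, pow_succ,
    mul_smul_comm]
  congr 1
  refine Finset.sum_congr rfl fun i _ => ?_
  rw [← neg_smul]
  ring_nf

theorem apply_ι_mul (hc : IsInteriorProduct B c) (x y : M) (w : ExteriorAlgebra ℝ M) :
    c x (ι ℝ y * w) = B x y • w - ι ℝ y * c x w := by
  have := LinearMap.ext_on_range (ιMulti_span ℝ M)
    (f := c x ∘ₗ LinearMap.mulLeft ℝ (ι ℝ y))
    (g := B x y • LinearMap.id - LinearMap.mulLeft ℝ (ι ℝ y) ∘ₗ c x)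
    fun ⟨n, v⟩ => by simpa [wedgeL, ιMulti_apply] using hc.apply_ι_mul_wedgeL x y v
  simpa using LinearMap.congr_fun this w

theorem sum_smul_ι_mul_apply_ι_mul (hc : IsInteriorProduct B c) {κ : Type} [Fintype κ]
    (e : κ → M) (ε : κ → ℝ) (hres : ∀ y, ∑ a, (ε a * B (e a) y) • e a = y)
    (y : M) (w : ExteriorAlgebra ℝ M) :
    ∑ a, ε a • (ι ℝ (e a) * c (e a) (ι ℝ y * w)) =
      ι ℝ y * w + ι ℝ y * ∑ a, ε a • (ι ℝ (e a) * c (e a) w) := by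
  have hswap : ∀ a, ι ℝ (e a) * (ι ℝ y * c (e a) w) = -(ι ℝ y * (ι ℝ (e a) * c (e a) w)) := by
    intro a
    rw [← mul_assoc, ← mul_assoc, ← neg_mul, ← eq_neg_of_add_eq_zero_left (ι_add_mul_swap _ _)]
  have hfirst : ∑ a, ε a • (B (e a) y • (ι ℝ (e a) * w)) = ι ℝ y * w := by
    simp_rw [smul_smul, ← smul_mul_assoc, ← Finset.sum_mul, ← map_smul, ← map_sum, hres]
  simp_rw [hc.apply_ι_mul, mul_sub, mul_smul_comm, hswap, sub_neg_eq_add, smul_add,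
    Finset.sum_add_distrib, hfirst, Finset.mul_sum, mul_smul_comm]

theorem sum_smul_ι_mul_apply_of_mem (hc : IsInteriorProduct B c) {κ : Type} [Fintype κ]
    (e : κ → M) (ε : κ → ℝ) (hres : ∀ y, ∑ a, (ε a * B (e a) y) • e a = y)
    {n : ℕ} {w : ExteriorAlgebra ℝ M} (hw : w ∈ ⋀[ℝ]^n M) :
    ∑ a, ε a • (ι ℝ (e a) * c (e a) w) = (n : ℝ) • w := by
  induction n generalizing w with
  | zero =>
    obtain ⟨r, rfl⟩ := Submodule.mem_one.1 (by simpa using hw)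
    simp [Algebra.algebraMap_eq_smul_one, hc.apply_one]
  | succ n ih =>
    rw [exteriorPower, pow_succ'] at hw
    induction hw using Submodule.mul_induction_on' with
    | mem_mul_mem a ha b hb =>
      obtain ⟨y, rfl⟩ := ha
      rw [hc.sum_smul_ι_mul_apply_ι_mul e ε hres, ih hb, mul_smul_comm]
      push_cast
      module
    | add x _ y _ hx hy => simp [mul_add, smul_add, Finset.sum_add_distrib, hx, hy, add_smul]

end IsInteriorProduct

theorem ι_mul_mem_exteriorPower_succ {M : Type} [AddCommGroup M] [Module ℝ M] (y : M) {n : ℕ}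
    {w : ExteriorAlgebra ℝ M} (hw : w ∈ ⋀[ℝ]^n M) : ι ℝ y * w ∈ ⋀[ℝ]^(n + 1) M := by
  rw [exteriorPower, pow_succ']
  exact Submodule.mul_mem_mul (LinearMap.mem_range_self _ _) hw

theorem Module.Basis.sum_mul_smul_eq_self {M : Type} [AddCommGroup M] [Module ℝ M] {κ : Type}
    [Fintype κ] [DecidableEq κ] (e : Module.Basis κ ℝ M) (B : M →ₗ[ℝ] M →ₗ[ℝ] ℝ) {ε : κ → ℝ}
    (hε : ∀ a, ε a * ε a = 1) (hB : ∀ a b, B (e a) (e b) = if a = b then ε a else 0) (y : M) :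
    ∑ a, (ε a * B (e a) y) • e a = y := by
  have hcoord : ∀ a, B (e a) = ε a • e.coord a := fun a =>
    e.ext fun b => by by_cases hab : a = b <;> simp [hB, hab]
  calc ∑ a, (ε a * B (e a) y) • e a = ∑ a, e.repr y a • e a := by
        simp [hcoord, ← mul_assoc, hε]
    _ = y := e.sum_repr y

section Bigraded

variable {U : Type} [AddCommGroup U] [Module ℝ U] {m : ℕ}

theorem solder_mul_tmul (u : Fin m → U) (ω : ExteriorAlgebra ℝ U)
    (τ : ExteriorAlgebra ℝ (Fin m → ℝ)) :
    solder u * (ω ⊗ₜ[ℝ] τ) = ∑ a, (ι ℝ (u a) * ω) ⊗ₜ[ℝ] (ι ℝ (Pi.single a 1) * τ) := by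
  simp [solder, Finset.sum_mul]

theorem trOp_tmul (u : Fin m → U) (cU : U → Module.End ℝ (ExteriorAlgebra ℝ U))
    (cW : (Fin m → ℝ) → Module.End ℝ (ExteriorAlgebra ℝ (Fin m → ℝ)))
    (ω : ExteriorAlgebra ℝ U) (τ : ExteriorAlgebra ℝ (Fin m → ℝ)) :
    trOp u cU cW (ω ⊗ₜ[ℝ] τ) = ∑ a, cU (u a) ω ⊗ₜ[ℝ] cW (Pi.single a 1) τ := by
  simp [trOp]

theorem solder_mul_mem_bideg (u : Fin m → U) {k h : ℕ} {Φ : Omega U m}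
    (hΦ : Φ ∈ bideg U m k h) : solder u * Φ ∈ bideg U m (k + 1) (h + 1) := by
  have hle : bideg U m k h ≤
      (bideg U m (k + 1) (h + 1)).comap (LinearMap.mulLeft ℝ (solder u)) := by
    refine Submodule.map₂_le.2 fun ω hω τ hτ => ?_
    rw [Submodule.mem_comap, LinearMap.mulLeft_apply, TensorProduct.mk_apply, solder_mul_tmul]
    exact Submodule.sum_mem _ fun a _ => Submodule.apply_mem_map₂ _
      (ι_mul_mem_exteriorPower_succ _ hω) (ι_mul_mem_exteriorPower_succ _ hτ)
  exact hle hΦ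

theorem solder_pow_mul_mem_bideg (u : Fin m → U) {k h : ℕ} {Φ : Omega U m}
    (hΦ : Φ ∈ bideg U m k h) (i : ℕ) : solder u ^ i * Φ ∈ bideg U m (k + i) (h + i) := by
  induction i with
  | zero => simpa using hΦ
  | succ i ih => simpa [pow_succ', mul_assoc, ← add_assoc] using solder_mul_mem_bideg u ih

theorem bideg_eq_bot_of_finrank_lt [Module.Finite ℝ U] {k : ℕ} (hk : Module.finrank ℝ U < k)
    (h : ℕ) : bideg U m k h = ⊥ := by
  have hpow : (⋀[ℝ]^k U : Submodule ℝ (ExteriorAlgebra ℝ U)) = ⊥ := by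
    rw [← Submodule.finrank_eq_zero, exteriorPower.finrank_eq, Nat.choose_eq_zero_of_lt hk]
  rw [bideg, hpow, Submodule.map₂_bot_left]

end Bigraded

section Commutator

variable {U : Type} [AddCommGroup U] [Module ℝ U] {m : ℕ} {g : U →ₗ[ℝ] U →ₗ[ℝ] ℝ}
  {η : (Fin m → ℝ) →ₗ[ℝ] (Fin m → ℝ) →ₗ[ℝ] ℝ} {cU : U → Module.End ℝ (ExteriorAlgebra ℝ U)}
  {cW : (Fin m → ℝ) → Module.End ℝ (ExteriorAlgebra ℝ (Fin m → ℝ))}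
  {u : Module.Basis (Fin m) ℝ U} {ε : Fin m → ℝ}

theorem trOp_solder_mul_tmul (hcU : IsInteriorProduct g cU) (hcW : IsInteriorProduct η cW)
    (hε : ∀ a, ε a * ε a = 1) (hg : ∀ a b, g (u a) (u b) = if a = b then ε a else 0)
    (hη : ∀ a b, η (Pi.single a 1) (Pi.single b 1) = if a = b then ε a else 0)
    {k h : ℕ} {ω : ExteriorAlgebra ℝ U} {τ : ExteriorAlgebra ℝ (Fin m → ℝ)}
    (hω : ω ∈ ⋀[ℝ]^k U) (hτ : τ ∈ ⋀[ℝ]^h (Fin m → ℝ)) :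
    trOp u cU cW (solder u * (ω ⊗ₜ[ℝ] τ)) =
      ((m : ℝ) - k - h) • (ω ⊗ₜ[ℝ] τ) + solder u * trOp u cU cW (ω ⊗ₜ[ℝ] τ) := by
  have hnumU := hcU.sum_smul_ι_mul_apply_of_mem u ε (u.sum_mul_smul_eq_self g hε hg) hω
  have hnumW := hcW.sum_smul_ι_mul_apply_of_mem (fun a => Pi.single a 1) ε (by
    simpa using (Pi.basisFun ℝ (Fin m)).sum_mul_smul_eq_self η hε (by simpa using hη)) hτ
  have hdiag : ∑ a, (ε a • ω) ⊗ₜ[ℝ] (ε a • τ) = (m : ℝ) • (ω ⊗ₜ[ℝ] τ) := by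
    simp only [smul_tmul_smul, hε, one_smul, Finset.sum_const, Finset.card_univ, Fintype.card_fin,
      ← Nat.cast_smul_eq_nsmul ℝ]
  have hU : ∑ a, (ι ℝ (u a) * cU (u a) ω) ⊗ₜ[ℝ] (ε a • τ) = (k : ℝ) • (ω ⊗ₜ[ℝ] τ) := by
    simp_rw [← smul_tmul, ← sum_tmul, hnumU, smul_tmul']
  have hW : ∑ a, (ε a • ω) ⊗ₜ[ℝ] (ι ℝ (Pi.single a 1) * cW (Pi.single a 1) τ) =
      (h : ℝ) • (ω ⊗ₜ[ℝ] τ) := by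
    simp_rw [smul_tmul, ← tmul_sum, hnumW, tmul_smul]
  rw [trOp_tmul, Finset.mul_sum, solder_mul_tmul, map_sum]
  simp only [trOp_tmul, solder_mul_tmul, hcU.apply_ι_mul, hcW.apply_ι_mul, hg, hη,
    sub_tmul, tmul_sub, Finset.sum_sub_distrib, ite_smul, zero_smul, ite_tmul, tmul_ite,
    Finset.sum_ite_eq', Finset.mem_univ, if_true, hW]
  rw [hdiag, hU, Finset.sum_comm]
  module

theorem trOp_solder_mul (hcU : IsInteriorProduct g cU) (hcW : IsInteriorProduct η cW)
    (hε : ∀ a, ε a * ε a = 1) (hg : ∀ a b, g (u a) (u b) = if a = b then ε a else 0)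
    (hη : ∀ a b, η (Pi.single a 1) (Pi.single b 1) = if a = b then ε a else 0)
    {k h : ℕ} {Φ : Omega U m} (hΦ : Φ ∈ bideg U m k h) :
    trOp u cU cW (solder u * Φ) = ((m : ℝ) - k - h) • Φ + solder u * trOp u cU cW Φ := by
  have hle : bideg U m k h ≤ LinearMap.eqLocus (trOp u cU cW ∘ₗ LinearMap.mulLeft ℝ (solder u))
      (((m : ℝ) - k - h) • LinearMap.id + LinearMap.mulLeft ℝ (solder u) ∘ₗ trOp u cU cW) :=
    Submodule.map₂_le.2 fun ω hω τ hτ => by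
      simpa using trOp_solder_mul_tmul hcU hcW hε hg hη hω hτ
  simpa using hle hΦ

end Commutator

section Injectivity

variable {U : Type} [AddCommGroup U] [Module ℝ U] {m : ℕ} {u : Fin m → U}
  {tr : Module.End ℝ (Omega U m)}

theorem map_solder_pow_succ_mul
    (hcomm : ∀ k h, ∀ Φ ∈ bideg U m k h,
      tr (solder u * Φ) = ((m : ℝ) - k - h) • Φ + solder u * tr Φ)
    {k h : ℕ} {Φ : Omega U m} (hΦ : Φ ∈ bideg U m k h) (i : ℕ) :
    tr (solder u ^ (i + 1) * Φ) =
      (((i : ℝ) + 1) * ((m : ℝ) - k - h - i)) • (solder u ^ i * Φ) +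
        solder u ^ (i + 1) * tr Φ := by
  induction i with
  | zero => simpa using hcomm k h Φ hΦ
  | succ i ih =>
    rw [pow_succ', mul_assoc, hcomm _ _ _ (solder_pow_mul_mem_bideg u hΦ (i + 1)), ih, mul_add,
      mul_smul_comm, ← mul_assoc, ← pow_succ', ← mul_assoc, ← pow_succ', ← add_assoc, ← add_smul]
    push_cast
    ring_nf

theorem eq_zero_of_map_eq_zero [Module.Finite ℝ U]
    (hcomm : ∀ k h, ∀ Φ ∈ bideg U m k h,
      tr (solder u * Φ) = ((m : ℝ) - k - h) • Φ + solder u * tr Φ)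
    {k h : ℕ} (hkh : m < k + h) {Φ : Omega U m} (hΦ : Φ ∈ bideg U m k h) (htr : tr Φ = 0) :
    Φ = 0 := by
  have hdesc : ∀ i, solder u ^ (i + 1) * Φ = 0 → solder u ^ i * Φ = 0 := by
    intro i hi
    have hcoef : ((i : ℝ) + 1) * ((m : ℝ) - k - h - i) ≠ 0 := by
      have : (m : ℝ) < k + h := by exact_mod_cast hkh
      exact mul_ne_zero (by positivity) (by linarith [(i.cast_nonneg : (0 : ℝ) ≤ i)])
    have hrec := map_solder_pow_succ_mul hcomm hΦ i
    rw [hi, htr, map_zero, mul_zero, add_zero] at hrec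
    exact (smul_eq_zero.1 hrec.symm).resolve_left hcoef
  have htop : solder u ^ (Module.finrank ℝ U + 1) * Φ = 0 := by
    have := solder_pow_mul_mem_bideg u hΦ (Module.finrank ℝ U + 1)
    rwa [bideg_eq_bot_of_finrank_lt (by omega), Submodule.mem_bot] at this
  suffices ∀ i, solder u ^ i * Φ = 0 → Φ = 0 from this _ htop
  intro i
  induction i with
  | zero => simp
  | succ i ih => exact fun hi => ih (hdesc i hi)

end Injectivity

theorem stmt_16_general (m s k h : ℕ) (hkh : m < k + h)
    (U : Type) [AddCommGroup U] [Module ℝ U]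
    (η : (Fin m → ℝ) →ₗ[ℝ] (Fin m → ℝ) →ₗ[ℝ] ℝ)
    (hη : ∀ v w, η v w = ∑ a : Fin _, (if (a : ℕ) < s then (-1 : ℝ) else 1) * v a * w a)
    (g : U →ₗ[ℝ] U →ₗ[ℝ] ℝ) (u : Module.Basis (Fin m) ℝ U)
    (hg : ∀ a b, g (u a) (u b) = if a = b then (if (a : ℕ) < s then (-1 : ℝ) else 1) else 0)
    (cU : U → Module.End ℝ (ExteriorAlgebra ℝ U))
    (hcU : ∀ (x : U) (n : ℕ) (v : Fin n → U),
      cU x (wedgeL v) = ∑ i : Fin n, ((-1 : ℝ) ^ (i : ℕ) * g x (v i)) •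
        ((List.ofFn fun j => ι ℝ (v j)).eraseIdx (i : ℕ)).prod)
    (cW : (Fin m → ℝ) → Module.End ℝ (ExteriorAlgebra ℝ (Fin m → ℝ)))
    (hcW : ∀ (y : Fin m → ℝ) (n : ℕ) (v : Fin n → (Fin m → ℝ)),
      cW y (wedgeL v) = ∑ i : Fin n, ((-1 : ℝ) ^ (i : ℕ) * η y (v i)) •
        ((List.ofFn fun j => ι ℝ (v j)).eraseIdx (i : ℕ)).prod)
    :
    (∀ Φ Ψ, Φ ∈ bideg U m k h → Ψ ∈ bideg U m k h →
      trOp (fun a => u a) cU cW Φ = trOp (fun a => u a) cU cW Ψ → Φ = Ψ) ∧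
    (∀ Φ, Φ ∈ bideg U m k h → trOp (fun a => u a) cU cW Φ = 0 →
      ∀ i ≤ min (m - k) (m - h), (solder (fun a => u a)) ^ i * Φ = 0) := by
  set ε : Fin m → ℝ := fun a => if (a : ℕ) < s then -1 else 1
  have hε : ∀ a, ε a * ε a = 1 := fun a => by by_cases ha : (a : ℕ) < s <;> simp [ε, ha]
  have hηT : ∀ a b, η (Pi.single a 1) (Pi.single b 1) = if a = b then ε a else 0 := fun a b => by
    rcases eq_or_ne a b with rfl | hab
    · simp [hη, Pi.single_apply, ε]
    · simp [hη, Pi.single_apply, hab, hab.symm]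
  have : Module.Finite ℝ U := Module.Finite.of_basis u
  have hinj : ∀ Φ ∈ bideg U m k h, trOp u cU cW Φ = 0 → Φ = 0 := fun Φ hΦ =>
    eq_zero_of_map_eq_zero (fun _ _ _ hΨ => trOp_solder_mul hcU hcW hε hg hηT hΨ) hkh hΦ
  refine ⟨fun Φ Ψ hΦ hΨ hΦΨ => sub_eq_zero.1 (hinj _ (sub_mem hΦ hΨ) ?_),
    fun Φ hΦ htr i _ => by rw [hinj Φ hΦ htr, mul_zero]⟩
  rw [map_sub, hΦΨ, sub_self]

/-- For `k + h > m`, the trace is injective on bidegree `(k,h)`; moreover `tr Φ = 0`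
implies `θ^i ⩕ Φ = 0` for all `i = 0, …, min{m−k, m−h}`. -/
theorem stmt_16 (m r s k h : ℕ) (hm : r + s = m) (hkh : m < k + h)
    (U : Type) [AddCommGroup U] [Module ℝ U]
    (η : (Fin m → ℝ) →ₗ[ℝ] (Fin m → ℝ) →ₗ[ℝ] ℝ)
    (hη : ∀ v w, η v w = ∑ a : Fin _, (if (a : ℕ) < s then (-1 : ℝ) else 1) * v a * w a)
    (g : U →ₗ[ℝ] U →ₗ[ℝ] ℝ) (u : Module.Basis (Fin m) ℝ U)
    (hg : ∀ a b, g (u a) (u b) = if a = b then (if (a : ℕ) < s then (-1 : ℝ) else 1) else 0)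
    (cU : U → Module.End ℝ (ExteriorAlgebra ℝ U))
    (hcU : ∀ (x : U) (n : ℕ) (v : Fin n → U),
      cU x (wedgeL v) = ∑ i : Fin n, ((-1 : ℝ) ^ (i : ℕ) * g x (v i)) •
        ((List.ofFn fun j => ι ℝ (v j)).eraseIdx (i : ℕ)).prod)
    (cW : (Fin m → ℝ) → Module.End ℝ (ExteriorAlgebra ℝ (Fin m → ℝ)))
    (hcW : ∀ (y : Fin m → ℝ) (n : ℕ) (v : Fin n → (Fin m → ℝ)),
      cW y (wedgeL v) = ∑ i : Fin n, ((-1 : ℝ) ^ (i : ℕ) * η y (v i)) •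
        ((List.ofFn fun j => ι ℝ (v j)).eraseIdx (i : ℕ)).prod)
    :
    (∀ Φ Ψ, Φ ∈ bideg U m k h → Ψ ∈ bideg U m k h →
      trOp (fun a => u a) cU cW Φ = trOp (fun a => u a) cU cW Ψ → Φ = Ψ) ∧
    (∀ Φ, Φ ∈ bideg U m k h → trOp (fun a => u a) cU cW Φ = 0 →
      ∀ i ≤ min (m - k) (m - h), (solder (fun a => u a)) ^ i * Φ = 0) :=
  stmt_16_general m s k h hkh U η hη g u hg cU hcU cW hcW
end
end
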